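/- arXiv:2311.10186 — 2 statements merged into one kernel-verified Lean document; each statement's English description precedes it below -/
import Mathlib

section
/- Let $\psi \colon [a,b] \to (0,+\infty]$ be a lower semicontinuous function with $\psi(a) < +\infty$ and $\psi(b) < +\infty$. Then for every $\eta > 0$ there exists a finite partition $a = r^0 < r^1 < \dots < r^{N} = b$ of $[a,b]$ such that for every $j \in \{1, \dots, N\}$ and every $s \in (r^{j-1}, r^j)$ one has $\psi(s) \geq \tfrac{1}{2}\big(\psi(r^{j-1}) + \psi(r^j)\big) - \eta$. -/
open scoped ENNReal

/-!
Let `x` be a minimum point of `ψ` on `[a, b]`. Walking from `a` towards `x`, jump from the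
current point `p` to the first point `c` where `ψ c ≤ ψ p - η` (a first point exists since
sublevel sets of a lower semicontinuous function are closed), or to `x` if there is none. On
`(p, c)` we have `ψ > ψ p - η`, and `ψ p` dominates `ψ c`; since `ψ` drops by `η` at each
jump and `ψ a < ∞`, the walk reaches `x` after finitely many jumps. The same walk from `b`,
i.e. for `s ↦ ψ (-s)`, joins `x` to `b`. This even bounds `ψ` below by the larger endpoint
value minus `η`, not just by the mean.
-/

open Set Relation

theorem Relation.ReflTransGen.exists_seq {α : Type*} {r : α → α → Prop} {a b : α}
    (h : ReflTransGen r a b) :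
    ∃ (N : ℕ) (f : ℕ → α), f 0 = a ∧ f N = b ∧ ∀ j < N, r (f j) (f (j + 1)) := by
  induction h using ReflTransGen.head_induction_on with
  | refl => exact ⟨0, fun _ => b, rfl, rfl, by simp⟩
  | @head a c hac _ ih =>
    obtain ⟨N, f, hf0, hfN, hf⟩ := ih
    refine ⟨N + 1, fun j => if j = 0 then a else f (j - 1), rfl, by simpa using hfN, ?_⟩
    rintro (_ | j) hj
    · simpa [hf0] using hac
    · simpa using hf j (by omega)

def AdmissibleStep (ψ : ℝ → ℝ≥0∞) (η : ℝ≥0∞) (p q : ℝ) : Prop :=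
  p < q ∧ ∀ s ∈ Ioo p q, max (ψ p) (ψ q) - η ≤ ψ s

namespace AdmissibleStep

variable {ψ : ℝ → ℝ≥0∞} {η : ℝ≥0∞} {p q : ℝ}

theorem of_le_left (hpq : p < q) (hq : ψ q ≤ ψ p) (h : ∀ s ∈ Ioo p q, ψ p - η ≤ ψ s) :
    AdmissibleStep ψ η p q :=
  ⟨hpq, by simpa only [max_eq_left hq] using h⟩

theorem of_comp_neg (h : AdmissibleStep (fun s => ψ (-s)) η p q) :
    AdmissibleStep ψ η (-q) (-p) := by
  refine ⟨neg_lt_neg h.1, fun s hs => ?_⟩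
  simpa [max_comm] using h.2 (-s) ⟨lt_neg_of_lt_neg hs.2, neg_lt_of_neg_lt hs.1⟩

end AdmissibleStep

section Chain

variable {ψ : ℝ → ℝ≥0∞} {η : ℝ≥0∞} {p x q : ℝ}

theorem admissibleStep_or_exists_descent (hη : η ≠ 0) (hpx : p < x)
    (hlsc : LowerSemicontinuousOn ψ (Icc p x)) (hmin : IsMinOn ψ (Icc p x) x) (hp : ψ p ≠ ⊤) :
    AdmissibleStep ψ η p x ∨ ∃ c ∈ Ioc p x, AdmissibleStep ψ η p c ∧ ψ c + η ≤ ψ p := by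
  have hxp : ψ x ≤ ψ p := hmin ⟨le_rfl, hpx.le⟩
  by_cases hpη : ψ p ≤ η
  · exact .inl (.of_le_left hpx hxp fun s _ => by simp [tsub_eq_zero_of_le hpη])
  have hηp : η < ψ p := not_le.1 hpη
  set T := Icc p x ∩ ψ ⁻¹' Iic (ψ p - η)
  rcases T.eq_empty_or_nonempty with hT | hT
  · refine .inl (.of_le_left hpx hxp fun s hs => ?_)
    by_contra! hs'
    exact hT.subset ⟨Ioo_subset_Icc_self hs, hs'.le⟩
  have hTc : IsCompact T := hlsc.isCompact_inter_preimage_Iic isCompact_Icc _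
  obtain ⟨hcI, hcψ⟩ : sInf T ∈ T := hTc.sInf_mem hT
  have hpc : p < sInf T := hcI.1.lt_of_ne fun hpc =>
    (ENNReal.sub_lt_self hp (pos_of_gt hηp).ne' hη).not_ge (hpc ▸ hcψ)
  refine .inr ⟨sInf T, ⟨hpc, hcI.2⟩,
    .of_le_left hpc (hcψ.trans tsub_le_self) fun s hs => ?_,
    (ENNReal.le_sub_iff_add_le_right (ne_top_of_lt hηp) hηp.le).1 hcψ⟩
  by_contra! hs'
  exact (csInf_le hTc.bddBelow ⟨⟨hs.1.le, hs.2.le.trans hcI.2⟩, hs'.le⟩).not_gt hs.2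

theorem reflTransGen_admissibleStep_of_isMinOn_right (hη : η ≠ 0) (hpx : p ≤ x)
    (hlsc : LowerSemicontinuousOn ψ (Icc p x)) (hmin : IsMinOn ψ (Icc p x) x) (hp : ψ p ≠ ⊤) :
    ReflTransGen (AdmissibleStep ψ η) p x := by
  obtain ⟨n, hn⟩ := ENNReal.exists_nat_mul_gt hη hp
  induction n generalizing p with
  | zero => simp at hn
  | succ n ih =>
    rcases hpx.eq_or_lt with rfl | hpx
    · exact .refl
    rcases admissibleStep_or_exists_descent hη hpx hlsc hmin hp with h | ⟨c, hc, hpc, hdrop⟩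
    · exact .single h
    have hηtop : η ≠ ⊤ := ne_top_of_le_ne_top hp (le_add_self.trans hdrop)
    have hsub : Icc c x ⊆ Icc p x := Icc_subset_Icc_left hc.1.le
    refine .head hpc (ih hc.2 (hlsc.mono hsub) (hmin.on_subset hsub)
      (ne_top_of_le_ne_top hp (le_self_add.trans hdrop)) ?_)
    rw [Nat.cast_succ, add_one_mul] at hn
    exact (ENNReal.add_lt_add_iff_right hηtop).1 (hdrop.trans_lt hn)

theorem reflTransGen_admissibleStep_of_isMinOn_left (hη : η ≠ 0) (hxq : x ≤ q)
    (hlsc : LowerSemicontinuousOn ψ (Icc x q)) (hmin : IsMinOn ψ (Icc x q) x) (hq : ψ q ≠ ⊤) :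
    ReflTransGen (AdmissibleStep ψ η) x q := by
  have hneg : MapsTo Neg.neg (Icc (-q) (-x)) (Icc x q) := fun s hs =>
    ⟨le_neg.1 hs.2, neg_le.1 hs.1⟩
  have h := reflTransGen_admissibleStep_of_isMinOn_right (ψ := fun s => ψ (-s)) hη
    (neg_le_neg hxq) (hlsc.comp continuousOn_neg hneg)
    (fun s hs => by simpa using hmin (hneg hs)) (by simpa using hq)
  simpa using reflTransGen_swap.1
    (h.lift (p := Function.swap (AdmissibleStep ψ η)) Neg.neg fun _ _ => AdmissibleStep.of_comp_neg)

end Chain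

theorem stmt0_general (a b : ℝ) (hab : a < b) (ψ : ℝ → ℝ≥0∞)
    (hlsc : LowerSemicontinuousOn ψ (Set.Icc a b))
    (hψa : ψ a ≠ ⊤) (hψb : ψ b ≠ ⊤)
    (η : ℝ≥0∞) (hη : 0 < η) :
    ∃ (N : ℕ) (r : ℕ → ℝ), 0 < N ∧ r 0 = a ∧ r N = b ∧
      (∀ j < N, r j < r (j + 1)) ∧
      ∀ j < N, ∀ s ∈ Set.Ioo (r j) (r (j + 1)),
        (ψ (r j) + ψ (r (j + 1))) / 2 - η ≤ ψ s := by
  obtain ⟨x, hx, hmin⟩ := hlsc.exists_isMinOn (nonempty_Icc.2 hab.le) isCompact_Icc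
  have hleft : Icc a x ⊆ Icc a b := Icc_subset_Icc_right hx.2
  have hright : Icc x b ⊆ Icc a b := Icc_subset_Icc_left hx.1
  have hchain : ReflTransGen (AdmissibleStep ψ η) a b :=
    (reflTransGen_admissibleStep_of_isMinOn_right hη.ne' hx.1 (hlsc.mono hleft)
      (hmin.on_subset hleft) hψa).trans
    (reflTransGen_admissibleStep_of_isMinOn_left hη.ne' hx.2 (hlsc.mono hright)
      (hmin.on_subset hright) hψb)
  obtain ⟨N, r, hr0, hrN, hstep⟩ := hchain.exists_seq
  refine ⟨N, r, Nat.pos_of_ne_zero ?_, hr0, hrN, fun j hj => (hstep j hj).1, fun j hj s hs => ?_⟩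
  · rintro rfl
    exact hab.ne (hr0.symm.trans hrN)
  have hmean : (ψ (r j) + ψ (r (j + 1))) / 2 ≤ max (ψ (r j)) (ψ (r (j + 1))) :=
    ENNReal.div_le_of_le_mul (mul_two (max (ψ (r j)) (ψ (r (j + 1)))) ▸ add_le_add (le_max_left _ _) (le_max_right _ _))
  exact (tsub_le_tsub_right hmean η).trans ((hstep j hj).2 s hs)

/-- If `ψ : [a,b] → (0,+∞]` is lower semicontinuous with `ψ(a), ψ(b)` finite, then for every
`η > 0` there is a finite partition `a = r⁰ < r¹ < ⋯ < r^N = b` such that on every open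
subinterval `(r^{j-1}, r^j)` one has `ψ(s) ≥ (ψ(r^{j-1}) + ψ(r^j))/2 - η`. -/
theorem stmt0 (a b : ℝ) (hab : a < b) (ψ : ℝ → ℝ≥0∞)
    (hpos : ∀ s ∈ Set.Icc a b, 0 < ψ s)
    (hlsc : LowerSemicontinuousOn ψ (Set.Icc a b))
    (hψa : ψ a ≠ ⊤) (hψb : ψ b ≠ ⊤)
    (η : ℝ≥0∞) (hη : 0 < η) :
    ∃ (N : ℕ) (r : ℕ → ℝ), 0 < N ∧ r 0 = a ∧ r N = b ∧
      (∀ j < N, r j < r (j + 1)) ∧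
      ∀ j < N, ∀ s ∈ Set.Ioo (r j) (r (j + 1)),
        (ψ (r j) + ψ (r (j + 1))) / 2 - η ≤ ψ s :=
  stmt0_general a b hab ψ hlsc hψa hψb η hη
end

section
/- Let $(\mathsf{X},\mathsf{H},\mathsf{X}^*)$ be a Hilbert triple (i.e.\ $\mathsf{X}$ is a Hilbert space densely and continuously embedded in the Hilbert space $\mathsf{H}$), and let $\mathsf{R} \colon \mathsf{X} \to [0,+\infty]$ be convex, positively 1-homogeneous with $\mathsf{R}(0)=0$. Define the extended $\mathsf{H}$-norm $\mathfrak{f}_{\mathsf{H}}(\xi) = \|\xi\|_{\mathsf{H}}$ if $\xi \in \mathsf{H}$ and $+\infty$ otherwise, for $\xi \in \mathsf{X}^*$. Then for every $\xi \in \mathsf{X}^*$, $\inf_{w \in \partial\mathsf{R}(0)} \mathfrak{f}_{\mathsf{H}}(\xi - w) = \sup\{ \langle \xi, \eta \rangle_{\mathsf{X}} - \mathsf{R}(\eta) \, : \, \eta \in \mathsf{X}, \ \|\eta\|_{\mathsf{H}} \leq 1 \}$. -/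
/-!
If `w ≤ R` and `ξ - w = ⟪h, i ·⟫`, then `ξ η - R η ≤ ⟪h, i η⟫ ≤ ‖h‖` whenever `‖i η‖ ≤ 1`,
which gives one inequality. Conversely, if the supremum is a finite `M`, positive homogeneity of
`R` upgrades it to `ξ η - R η ≤ M ‖i η‖` for all `η`. The infimal convolution
`p x = inf_η (R η - ξ η + M ‖x - i η‖)` is then a real-valued sublinear functional on `H` with
`p ≤ M ‖·‖` and `p (i η) ≤ R η - ξ η`. A linear `g ≤ p` given by Hahn–Banach has norm at most `M`,
and with `h` the Riesz representative of `-g`, the functional `w = ξ + g ∘ i` lies in `∂R(0)` and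
satisfies `ξ - w = ⟪h, i ·⟫`.
-/

open scoped ENNReal

section InfConvolution

variable {X E : Type*} [AddCommGroup X] [Module ℝ X] [SeminormedAddCommGroup E] [NormedSpace ℝ E]
  (T : X →ₗ[ℝ] E) (C : PointedCone ℝ X) (φ : X → ℝ) (M : ℝ)

noncomputable def infConvNorm (x : E) : ℝ :=
  ⨅ a : C, (φ a + M * ‖x - T a‖)

variable {T C φ M} (hM : 0 ≤ M) (hφ : ∀ a ∈ C, -φ a ≤ M * ‖T a‖)
include hM hφ

lemma neg_mul_norm_le_add_mul_norm {a : X} (ha : a ∈ C) (x : E) :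
    -(M * ‖x‖) ≤ φ a + M * ‖x - T a‖ := by
  have h := mul_le_mul_of_nonneg_left (norm_le_insert' (T a) x) hM
  rw [norm_sub_rev] at h
  linarith [hφ a ha]

lemma bddBelow_infConvNorm (x : E) :
    BddBelow (Set.range fun a : C => φ a + M * ‖x - T a‖) :=
  ⟨-(M * ‖x‖), by rintro _ ⟨a, rfl⟩; exact neg_mul_norm_le_add_mul_norm hM hφ a.2 x⟩

lemma infConvNorm_le {a : X} (ha : a ∈ C) (x : E) :
    infConvNorm T C φ M x ≤ φ a + M * ‖x - T a‖ :=
  ciInf_le (bddBelow_infConvNorm hM hφ x) ⟨a, ha⟩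

lemma infConvNorm_apply_le {a : X} (ha : a ∈ C) : infConvNorm T C φ M (T a) ≤ φ a := by
  simpa using infConvNorm_le hM hφ ha (T a)

lemma neg_mul_norm_le_infConvNorm (x : E) : -(M * ‖x‖) ≤ infConvNorm T C φ M x :=
  le_ciInf fun a => neg_mul_norm_le_add_mul_norm hM hφ a.2 x

variable (hφ_smul : ∀ c : ℝ, 0 < c → ∀ a ∈ C, φ (c • a) = c * φ a)
include hφ_smul

lemma infConvNorm_le_mul_norm (x : E) : infConvNorm T C φ M x ≤ M * ‖x‖ := by
  have hφ0 : φ 0 = 0 := by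
    have h := hφ_smul 2 two_pos 0 C.zero_mem
    rw [smul_zero] at h
    linarith
  simpa [hφ0] using infConvNorm_le hM hφ C.zero_mem x

lemma infConvNorm_smul_le {c : ℝ} (hc : 0 < c) (x : E) :
    infConvNorm T C φ M (c • x) ≤ c * infConvNorm T C φ M x := by
  unfold infConvNorm
  rw [Real.mul_iInf_of_nonneg hc.le]
  refine le_ciInf fun a => (infConvNorm_le hM hφ (C.smul_mem hc.le a.2) _).trans_eq ?_
  rw [hφ_smul c hc a a.2, map_smul, ← smul_sub, norm_smul, Real.norm_of_nonneg hc.le]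
  ring

lemma infConvNorm_smul {c : ℝ} (hc : 0 < c) (x : E) :
    infConvNorm T C φ M (c • x) = c * infConvNorm T C φ M x := by
  refine le_antisymm (infConvNorm_smul_le hM hφ hφ_smul hc x) ?_
  calc c * infConvNorm T C φ M x = c * infConvNorm T C φ M (c⁻¹ • c • x) := by
        rw [inv_smul_smul₀ hc.ne']
    _ ≤ c * (c⁻¹ * infConvNorm T C φ M (c • x)) :=
        mul_le_mul_of_nonneg_left (infConvNorm_smul_le hM hφ hφ_smul (inv_pos.2 hc) _) hc.le
    _ = infConvNorm T C φ M (c • x) := mul_inv_cancel_left₀ hc.ne' _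

omit hφ_smul in
lemma infConvNorm_add_le (hφ_add : ∀ a ∈ C, ∀ b ∈ C, φ (a + b) ≤ φ a + φ b) (x y : E) :
    infConvNorm T C φ M (x + y) ≤ infConvNorm T C φ M x + infConvNorm T C φ M y := by
  refine le_ciInf_add_ciInf fun a b => (infConvNorm_le hM hφ (C.add_mem a.2 b.2) _).trans ?_
  have h : ‖x + y - T (a + b)‖ ≤ ‖x - T a‖ + ‖y - T b‖ := by
    rw [map_add, add_sub_add_comm]
    exact norm_add_le _ _
  linarith [hφ_add a a.2 b b.2, mul_le_mul_of_nonneg_left h hM]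

theorem exists_norm_le_forall_apply_le (hφ_add : ∀ a ∈ C, ∀ b ∈ C, φ (a + b) ≤ φ a + φ b) :
    ∃ g : E →L[ℝ] ℝ, ‖g‖ ≤ M ∧ ∀ a ∈ C, g (T a) ≤ φ a := by
  obtain ⟨g, -, hg⟩ := exists_extension_of_le_sublinear ((0 : E →ₗ[ℝ] ℝ).toPMap ⊥)
    (infConvNorm T C φ M) (fun c hc x => infConvNorm_smul hM hφ hφ_smul hc x)
    (infConvNorm_add_le hM hφ hφ_add) fun x => by
      have hx : (x : E) = 0 := (Submodule.mem_bot ℝ).1 x.2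
      show (0 : ℝ) ≤ _
      simpa [hx] using neg_mul_norm_le_infConvNorm hM hφ (0 : E)
  have hg_norm : ∀ x, ‖g x‖ ≤ M * ‖x‖ := by
    intro x
    rw [Real.norm_eq_abs, abs_le]
    have hneg := (hg (-x)).trans (infConvNorm_le_mul_norm hM hφ hφ_smul (-x))
    rw [map_neg, norm_neg] at hneg
    exact ⟨by linarith, (hg x).trans (infConvNorm_le_mul_norm hM hφ hφ_smul x)⟩
  exact ⟨g.mkContinuous M hg_norm, g.mkContinuous_norm_le hM hg_norm,
    fun a ha => (hg (T a)).trans (infConvNorm_apply_le hM hφ ha)⟩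

end InfConvolution

section PositivelyHomogeneous

variable {X : Type*} [AddCommGroup X] [Module ℝ X] {R : X → ℝ≥0∞}

lemma add_le_of_convex_of_homogeneous
    (hconv : ∀ v w : X, ∀ t : ℝ, 0 ≤ t → t ≤ 1 →
      R (t • v + (1 - t) • w) ≤ ENNReal.ofReal t * R v + ENNReal.ofReal (1 - t) * R w)
    (hhom : ∀ c : ℝ, 0 < c → ∀ v : X, R (c • v) = ENNReal.ofReal c * R v) (v w : X) :
    R (v + w) ≤ R v + R w := by
  have hmid : v + w = (2 : ℝ) • ((1 / 2 : ℝ) • v + (1 - 1 / 2 : ℝ) • w) := by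
    rw [smul_add, smul_smul, smul_smul]
    norm_num
  calc R (v + w) = ENNReal.ofReal 2 * R ((1 / 2 : ℝ) • v + (1 - 1 / 2 : ℝ) • w) := by
        rw [hmid, hhom 2 two_pos]
    _ ≤ ENNReal.ofReal 2 * (ENNReal.ofReal (1 / 2) * R v + ENNReal.ofReal (1 - 1 / 2) * R w) :=
        mul_le_mul_right (hconv v w _ (by norm_num) (by norm_num)) _
    _ = R v + R w := by
        rw [mul_add, ← mul_assoc, ← mul_assoc, ← ENNReal.ofReal_mul zero_le_two,
          ← ENNReal.ofReal_mul zero_le_two]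
        norm_num

def effectiveDomain (hR0 : R 0 = 0) (hadd : ∀ v w : X, R (v + w) ≤ R v + R w)
    (hhom : ∀ c : ℝ, 0 < c → ∀ v : X, R (c • v) = ENNReal.ofReal c * R v) : PointedCone ℝ X where
  carrier := {v | R v ≠ ∞}
  zero_mem' := by simp [hR0]
  add_mem' {v w} hv hw := ne_top_of_le_ne_top (ENNReal.add_ne_top.2 ⟨hv, hw⟩) (hadd v w)
  smul_mem' := by
    rintro ⟨c, hc⟩ v hv
    change R (c • v) ≠ ∞
    rcases hc.eq_or_lt with rfl | hc
    · simp [hR0]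
    · exact (hhom c hc v).trans_ne (ENNReal.mul_ne_top ENNReal.ofReal_ne_top hv)

end PositivelyHomogeneous

lemma le_mul_of_forall_pos_mul_le {a b M : ℝ} (hM : 0 ≤ M) (hb : 0 ≤ b)
    (h : ∀ t : ℝ, 0 < t → t * b ≤ 1 → t * a ≤ M) : a ≤ M * b := by
  rcases hb.eq_or_lt with rfl | hb
  · rw [mul_zero]
    by_contra! ha
    have h' := h ((M + 1) / a) (by positivity) (by simp)
    rw [div_mul_cancel₀ _ ha.ne'] at h'
    linarith
  · have h' := h b⁻¹ (inv_pos.2 hb) (inv_mul_cancel₀ hb.ne').le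
    rwa [inv_mul_le_iff₀ hb, mul_comm] at h'

section Duality

variable {X H : Type*} [NormedAddCommGroup H] [InnerProductSpace ℝ H] {R : X → ℝ≥0∞}

lemma coe_sub_le_norm_of_sub_eq_inner {a b : ℝ} {r : EReal} {h v : H} (hb : (b : EReal) ≤ r)
    (hab : a - b = inner ℝ h v) (hv : ‖v‖ ≤ 1) : (a : EReal) - r ≤ ‖h‖ :=
  calc (a : EReal) - r ≤ a - b := EReal.sub_le_sub le_rfl hb
    _ = ((a - b : ℝ) : EReal) := (EReal.coe_sub a b).symm
    _ ≤ ‖h‖ := EReal.coe_le_coe_iff.2 <| hab ▸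
        (real_inner_le_norm h v).trans (mul_le_of_le_one_right (norm_nonneg h) hv)

variable [AddCommGroup X] [Module ℝ X]

lemma sub_toReal_le_mul_norm (i : X →ₗ[ℝ] H) (ξ : X →ₗ[ℝ] ℝ)
    (hhom : ∀ c : ℝ, 0 < c → ∀ v : X, R (c • v) = ENNReal.ofReal c * R v) {M : ℝ} (hM : 0 ≤ M)
    (hS : ∀ η, ‖i η‖ ≤ 1 → (ξ η : EReal) - R η ≤ M) {η : X} (hη : R η ≠ ∞) :
    ξ η - (R η).toReal ≤ M * ‖i η‖ := by
  refine le_mul_of_forall_pos_mul_le hM (norm_nonneg _) fun t ht hti => ?_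
  have hRt : R (t • η) = ENNReal.ofReal t * R η := hhom t ht η
  have h := hS (t • η) (by rwa [map_smul, norm_smul, Real.norm_of_nonneg ht.le])
  rw [← EReal.coe_ennreal_toReal (hRt ▸ ENNReal.mul_ne_top ENNReal.ofReal_ne_top hη), hRt,
    ENNReal.toReal_mul, ENNReal.toReal_ofReal ht.le, ← EReal.coe_sub, EReal.coe_le_coe_iff,
    map_smul, smul_eq_mul] at h
  linarith

end Duality

theorem exists_subgradient_of_sub_le_mul_norm {X H : Type*}
    [NormedAddCommGroup X] [NormedSpace ℝ X]
    [NormedAddCommGroup H] [InnerProductSpace ℝ H] [CompleteSpace H]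
    (i : X →L[ℝ] H) {R : X → ℝ≥0∞} (hR0 : R 0 = 0) (hadd : ∀ v w : X, R (v + w) ≤ R v + R w)
    (hhom : ∀ c : ℝ, 0 < c → ∀ v : X, R (c • v) = ENNReal.ofReal c * R v)
    (ξ : X →L[ℝ] ℝ) {M : ℝ} (hM : 0 ≤ M)
    (hbound : ∀ η, R η ≠ ∞ → ξ η - (R η).toReal ≤ M * ‖i η‖) :
    ∃ w : X →L[ℝ] ℝ, (∀ η, (w η : EReal) ≤ R η) ∧
      ∃ h : H, (∀ η, (ξ - w) η = inner ℝ h (i η)) ∧ ‖h‖ ≤ M := by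
  obtain ⟨g, hg_norm, hg⟩ := exists_norm_le_forall_apply_le (T := (i : X →ₗ[ℝ] H))
    (C := effectiveDomain hR0 hadd hhom) (φ := fun η => (R η).toReal - ξ η) hM
    (fun η hη => by
      have := hbound η hη
      rw [ContinuousLinearMap.coe_coe]
      linarith)
    (fun c hc η hη => by
      simp only [hhom c hc, ENNReal.toReal_mul, ENNReal.toReal_ofReal hc.le, map_smul, smul_eq_mul]
      ring)
    (fun v hv w hw => by
      have h := ENNReal.toReal_mono (ENNReal.add_ne_top.2 ⟨hv, hw⟩) (hadd v w)
      rw [ENNReal.toReal_add hv hw] at h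
      simp only [map_add]
      linarith)
  refine ⟨ξ + g.comp i, fun η => ?_, -(InnerProductSpace.toDual ℝ H).symm g, fun η => ?_,
    by rwa [norm_neg, LinearIsometryEquiv.norm_map]⟩
  · by_cases hη : R η = ∞
    · simp [hη]
    · rw [← EReal.coe_ennreal_toReal hη, EReal.coe_le_coe_iff]
      have := hg η hη
      rw [ContinuousLinearMap.coe_coe] at this
      simp only [add_apply, ContinuousLinearMap.comp_apply]
      linarith
  · simp [inner_neg_left, InnerProductSpace.toDual_symm_apply]

theorem stmt1_general {X H : Type*}
    [NormedAddCommGroup X] [InnerProductSpace ℝ X]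
    [NormedAddCommGroup H] [InnerProductSpace ℝ H] [CompleteSpace H]
    (i : X →L[ℝ] H)
    (R : X → ℝ≥0∞) (hR0 : R 0 = 0)
    (hconv : ∀ v w : X, ∀ t : ℝ, 0 ≤ t → t ≤ 1 →
      R (t • v + (1 - t) • w) ≤ ENNReal.ofReal t * R v + ENNReal.ofReal (1 - t) * R w)
    (hhom : ∀ c : ℝ, 0 < c → ∀ v : X, R (c • v) = ENNReal.ofReal c * R v)
    (ξ : X →L[ℝ] ℝ) :
    (((⨅ w ∈ {w : X →L[ℝ] ℝ | ∀ η : X, ((w η : ℝ) : EReal) ≤ (R η : EReal)},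
        ⨅ h ∈ {h : H | ∀ η : X, (ξ - w) η = (inner ℝ h (i η) : ℝ)},
          (‖h‖₊ : ℝ≥0∞)) : ℝ≥0∞) : EReal)
      = ⨆ η ∈ {η : X | ‖i η‖ ≤ 1}, (((ξ η : ℝ) : EReal) - (R η : EReal)) := by
  refine le_antisymm (EReal.le_of_forall_lt_iff_le.1 fun M hM => ?_) ?_
  · have hS : ∀ η, ‖i η‖ ≤ 1 → (ξ η : EReal) - R η ≤ M := fun η hη =>
      ((le_iSup₂ (f := fun η (_ : η ∈ {η : X | ‖i η‖ ≤ 1}) => (ξ η : EReal) - R η) η hη).trans_lt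
        hM).le
    have hM0 : 0 ≤ M := EReal.coe_nonneg.1 <| by simpa [hR0] using hS 0 (by simp)
    obtain ⟨w, hw, h, hh, hhM⟩ := exists_subgradient_of_sub_le_mul_norm i hR0
      (add_le_of_convex_of_homogeneous hconv hhom) hhom ξ hM0
      fun η => sub_toReal_le_mul_norm (i : X →ₗ[ℝ] H) (ξ : X →ₗ[ℝ] ℝ) hhom hM0 hS
    calc _ ≤ ((‖h‖₊ : ℝ≥0∞) : EReal) :=
          EReal.coe_ennreal_le_coe_ennreal_iff.2 (iInf₂_le_of_le w hw (iInf₂_le h hh))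
      _ ≤ M := by rw [EReal.coe_nnreal_eq_coe_real, coe_nnnorm]; exact_mod_cast hhM
  · -- compare in `ℝ≥0∞` through `EReal.toENNReal = max 0 ·`
    refine iSup₂_le fun η hη => (le_max_right 0 _).trans ?_
    rw [← EReal.coe_toENNReal_eq_max, EReal.coe_ennreal_le_coe_ennreal_iff]
    refine le_iInf₂ fun w hw => le_iInf₂ fun h hh => ?_
    rw [← EReal.toENNReal_coe (x := (‖h‖₊ : ℝ≥0∞)), EReal.coe_nnreal_eq_coe_real, coe_nnnorm]
    exact EReal.toENNReal_le_toENNReal (coe_sub_le_norm_of_sub_eq_inner (hw η) (hh η) hη)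

/-- Duality formula in a Hilbert triple `(X, H, X*)` (with `i : X → H` a dense continuous
embedding and `H` embedded into `X*` via `h ↦ ⟨h, i ·⟩`): for a convex, positively
1-homogeneous `R : X → [0,+∞]` with `R(0)=0`, and every `ξ ∈ X*`,
`inf_{w ∈ ∂R(0)} 𝔣_H(ξ - w) = sup { ⟨ξ,η⟩ - R(η) : η ∈ X, ‖i η‖_H ≤ 1 }`,
where `𝔣_H(ξ') = ‖h‖_H` if `ξ' = ⟨h, i ·⟩` for some `h ∈ H` and `+∞` otherwise
(expressed below as an infimum over all such representatives `h`). -/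
theorem stmt1 {X H : Type*}
    [NormedAddCommGroup X] [InnerProductSpace ℝ X] [CompleteSpace X]
    [NormedAddCommGroup H] [InnerProductSpace ℝ H] [CompleteSpace H]
    (i : X →L[ℝ] H) (hdense : DenseRange i)
    (R : X → ℝ≥0∞) (hR0 : R 0 = 0)
    (hconv : ∀ v w : X, ∀ t : ℝ, 0 ≤ t → t ≤ 1 →
      R (t • v + (1 - t) • w) ≤ ENNReal.ofReal t * R v + ENNReal.ofReal (1 - t) * R w)
    (hhom : ∀ c : ℝ, 0 < c → ∀ v : X, R (c • v) = ENNReal.ofReal c * R v)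
    (ξ : X →L[ℝ] ℝ) :
    (((⨅ w ∈ {w : X →L[ℝ] ℝ | ∀ η : X, ((w η : ℝ) : EReal) ≤ (R η : EReal)},
        ⨅ h ∈ {h : H | ∀ η : X, (ξ - w) η = (inner ℝ h (i η) : ℝ)},
          (‖h‖₊ : ℝ≥0∞)) : ℝ≥0∞) : EReal)
      = ⨆ η ∈ {η : X | ‖i η‖ ≤ 1}, (((ξ η : ℝ) : EReal) - (R η : EReal)) :=
  stmt1_general i R hR0 hconv hhom ξ
end
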